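/- Let I = (G, A, B, u_A, u_B, k) be an instance of bounded-degree cut and let X1, X2 ⊆ V be fixed subsets. Then there exists a family 𝒬 of at most 2^{6k} pairs (Y1, Y2) of subsets of V with Y1 ⊆ N(X2) and Y2 ⊆ N(X1) such that for every feasible (A,B)-cut (V1, V2) of I satisfying Z_A ∩ V1 = X1 and Z_B ∩ V2 = X2, the pair (N(X2) ∩ V1, N(X1) ∩ V2) belongs to 𝒬. -/

import Mathlib

open Finset

variable {V : Type*} [Fintype V] [DecidableEq V]

/-- Cut-size of the cut `(V1, V ∖ V1)`. -/
def cutSize (w : V → V → ℕ) (V1 : Finset V) : ℕ :=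
  ∑ u ∈ V1, ∑ v ∈ V1ᶜ, w u v

/-- Boundary `δ(X)`: unordered pairs `{u,v}` with `u ∈ X`, `v ∉ X`, `w u v > 0`. -/
def bdry (w : V → V → ℕ) (X : Finset V) : Set (Sym2 V) :=
  {e | ∃ u v, e = s(u, v) ∧ u ∈ X ∧ v ∉ X ∧ 0 < w u v}

/-- `(A,B)`-cut, represented by its first part `V1` (the second part is `V1ᶜ`). -/
def IsCut (A B V1 : Finset V) : Prop := A ⊆ V1 ∧ B ⊆ V1ᶜ

/-- Minimal `(A,B)`-cut. -/
def IsMinimalCut (w : V → V → ℕ) (A B V1 : Finset V) : Prop :=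
  IsCut A B V1 ∧
  (¬ ∃ V1' : Finset V, A ⊆ V1' ∧ V1' ⊂ V1 ∧ bdry w V1' ⊆ bdry w V1) ∧
  (¬ ∃ V2' : Finset V, B ⊆ V2' ∧ V2' ⊂ V1ᶜ ∧ bdry w V2' ⊆ bdry w V1)

/-- Minimum `(A,B)`-cut. -/
def IsMinCut (w : V → V → ℕ) (A B V1 : Finset V) : Prop :=
  IsCut A B V1 ∧ ∀ U : Finset V, IsCut A B U → cutSize w V1 ≤ cutSize w U

/-- MM `(A,B)`-cut: minimum cut with `|V1|` maximum among minimum cuts. -/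
def IsMMCut (w : V → V → ℕ) (A B V1 : Finset V) : Prop :=
  IsMinCut w A B V1 ∧ ∀ U : Finset V, IsMinCut w A B U → U.card ≤ V1.card

/-- Important `(A,B)`-cut. -/
def IsImportantCut (w : V → V → ℕ) (A B V1 : Finset V) : Prop :=
  IsMinimalCut w A B V1 ∧
  ¬ ∃ X' : Finset V, IsCut A B X' ∧ V1 ⊂ X' ∧ cutSize w X' ≤ cutSize w V1

/-- Degree of a vertex. -/
def deg (w : V → V → ℕ) (v : V) : ℕ := ∑ u, w v u

/-- `deg(v; X)`: degree of `v` towards `X ∖ {v}`. -/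
def degIn (w : V → V → ℕ) (v : V) (X : Finset V) : ℕ :=
  ∑ u ∈ X.erase v, w v u

/-- Neighborhood `N(X)`. -/
def nbhd (w : V → V → ℕ) (X : Finset V) : Finset V :=
  Finset.univ.filter (fun u => u ∉ X ∧ ∃ x ∈ X, 0 < w u x)

/-- Feasible `(A,B)`-cut for the bounded-degree cut instance `(G,A,B,uA,uB,k)`. -/
def FeasibleCut (w : V → V → ℕ) (uA uB : V → ℕ) (k : ℕ) (A B VA : Finset V) : Prop :=
  IsMinimalCut w A B VA ∧ cutSize w VA ≤ k ∧
  (∀ v ∈ VA, degIn w v VA ≤ uA v) ∧ (∀ v ∈ VAᶜ, degIn w v VAᶜ ≤ uB v)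

/-- Feasibility of the instance `(G,A,B,uA,uB,k)`. -/
def Feasible (w : V → V → ℕ) (uA uB : V → ℕ) (k : ℕ) (A B : Finset V) : Prop :=
  ∃ VA : Finset V, FeasibleCut w uA uB k A B VA

/-- Unsatisfied vertices w.r.t. an upper-bound function `u` : `{v : deg(v) > u v}`. -/
def unsat (w : V → V → ℕ) (u : V → ℕ) : Finset V :=
  Finset.univ.filter (fun v => u v < deg w v)

/-- Easy instance. -/
def EasyInstance (w : V → V → ℕ) (uA uB : V → ℕ) (A B : Finset V) : Prop :=
  unsat w uA ∪ unsat w uB ⊆ A ∪ B ∧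
  nbhd w (unsat w uA ∩ A) ⊆ A ∪ B ∧
  nbhd w (unsat w uB ∩ B) ⊆ A ∪ B

/-- `A_π` for the cut `π = (V1, V1ᶜ)`. -/
def Api (w : V → V → ℕ) (uA uB : V → ℕ) (A V1 : Finset V) : Finset V :=
  A ∪ (unsat w uA ∩ V1) ∪ (unsat w uB ∩ V1) ∪
    (nbhd w (unsat w uA ∩ V1) ∩ V1) ∪ (nbhd w (unsat w uB ∩ V1ᶜ) ∩ V1)

/-- `B_π` for the cut `π = (V1, V1ᶜ)`. -/
def Bpi (w : V → V → ℕ) (uA uB : V → ℕ) (B V1 : Finset V) : Finset V :=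
  B ∪ (unsat w uA ∩ V1ᶜ) ∪ (unsat w uB ∩ V1ᶜ) ∪
    (nbhd w (unsat w uA ∩ V1) ∩ V1ᶜ) ∪ (nbhd w (unsat w uB ∩ V1ᶜ) ∩ V1ᶜ)


/-!
A feasible cut `V1` with `Z_A ∩ V1 = X1` and `Z_B ∩ V1ᶜ = X2` is an `(A ∪ X1, B ∪ X2)`-cut
of size at most `k`, and by minimality every vertex of `V1` is reachable from `A` inside `V1`.
Such a cut lies inside an important cut `W` of size at most `k`, and `N(X2) ∩ V1 ⊆ N(X2) ∩ W`,
a set of at most `k` vertices because each of them has an edge leaving `W`.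

There are at most `4^k` important cuts of size at most `k`. All of them contain the furthest
minimum cut, and branching on an arc `uv` leaving it either moves `v` to the source side, which
raises the minimum cut size `λ`, or deletes the arc, which lowers `k` by one and `λ` by at most
one; either way `2k - λ` drops. So `N(X2) ∩ V1` takes at most `4^k · 2^k = 2^{3k}` values, and
symmetrically so does `N(X1) ∩ V1ᶜ`.
-/

section CutSize

variable (w : V → V → ℕ)

lemma cutSize_eq_sum_ite (W : Finset V) :
    cutSize w W = ∑ a, ∑ b, if a ∈ W ∧ b ∉ W then w a b else 0 := by
  simp only [cutSize, ite_and, ← mem_compl, sum_ite_irrel, sum_const_zero, sum_ite_mem,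
    univ_inter]

lemma cutSize_union_add_cutSize_inter_le (X Y : Finset V) :
    cutSize w (X ∪ Y) + cutSize w (X ∩ Y) ≤ cutSize w X + cutSize w Y := by
  simp only [cutSize_eq_sum_ite, ← sum_add_distrib]
  refine sum_le_sum fun a _ => sum_le_sum fun b _ => ?_
  by_cases a ∈ X <;> by_cases a ∈ Y <;> by_cases b ∈ X <;> by_cases b ∈ Y <;> simp [*]

lemma cutSize_compl (hsymm : ∀ a b, w a b = w b a) (W : Finset V) :
    cutSize w Wᶜ = cutSize w W := by
  rw [cutSize, compl_compl, sum_comm, cutSize]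
  simp only [hsymm]

lemma cutSize_add (w' : V → V → ℕ) (W : Finset V) :
    cutSize (w + w') W = cutSize w W + cutSize w' W := by
  simp only [cutSize, Pi.add_apply, sum_add_distrib]

variable {w}

lemma cutSize_le_of_subset_of_forall_eq_zero {R W : Finset V} (hRW : R ⊆ W)
    (hR : ∀ a ∈ R, ∀ b ∈ W, b ∉ R → w a b = 0) : cutSize w R ≤ cutSize w W := by
  simp only [cutSize_eq_sum_ite]
  refine sum_le_sum fun a _ => sum_le_sum fun b _ => ?_
  by_cases ha : a ∈ R
  · by_cases hb : b ∈ R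
    · simp [hb]
    · by_cases hbW : b ∈ W
      · simp [hR a ha b hbW hb]
      · simp [ha, hb, hbW, hRW ha]
  · simp [ha]

lemma exists_adj_of_cutSize_ne_zero {W : Finset V} (h : cutSize w W ≠ 0) :
    ∃ a ∈ W, ∃ b ∉ W, 0 < w a b := by
  obtain ⟨a, ha, hsum⟩ := exists_ne_zero_of_sum_ne_zero h
  obtain ⟨b, hb, hab⟩ := exists_ne_zero_of_sum_ne_zero hsum
  exact ⟨a, ha, b, mem_compl.1 hb, Nat.pos_of_ne_zero hab⟩

lemma mem_of_cutSize_eq_zero {P : Finset V} {a b : V} (hP : cutSize w P = 0) (ha : a ∈ P)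
    (hab : 0 < w a b) : b ∈ P := by
  by_contra hb
  have := sum_eq_zero_iff.1 (sum_eq_zero_iff.1 hP a ha) b (mem_compl.2 hb)
  omega

lemma card_nbhd_inter_le_cutSize {X W : Finset V} (hX : X ⊆ Wᶜ) :
    #(nbhd w X ∩ W) ≤ cutSize w W := by
  calc #(nbhd w X ∩ W) = ∑ _ ∈ nbhd w X ∩ W, 1 := card_eq_sum_ones _
    _ ≤ ∑ a ∈ nbhd w X ∩ W, ∑ b ∈ Wᶜ, w a b := by
        gcongr with a ha
        obtain ⟨-, -, x, hx, hax⟩ := mem_filter.1 (mem_inter.1 ha).1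
        exact hax.trans_le (single_le_sum (fun _ _ => Nat.zero_le _) (hX hx))
    _ ≤ cutSize w W := sum_le_sum_of_subset inter_subset_right

end CutSize

section Reachability

variable {α : Type*} (w : α → α → ℕ)

def ReachIn (W : Finset α) : α → α → Prop :=
  Relation.ReflTransGen fun a b => a ∈ W ∧ b ∈ W ∧ 0 < w a b

def IsConnectedFrom (S W : Finset α) : Prop :=
  ∀ x ∈ W, ∃ s ∈ S, ReachIn w W s x

open scoped Classical in
noncomputable def reachSet (S W : Finset α) : Finset α :=
  W.filter fun x => ∃ s ∈ S, ReachIn w W s x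

variable {w} {w' : α → α → ℕ} {S S' W W' : Finset α} {a b : α}

lemma ReachIn.mono (hW : W ⊆ W') (hw : ∀ a ∈ W, ∀ b ∈ W, 0 < w a b → 0 < w' a b)
    (h : ReachIn w W a b) : ReachIn w' W' a b :=
  Relation.ReflTransGen.mono (fun _ _ h => ⟨hW h.1, hW h.2.1, hw _ h.1 _ h.2.1 h.2.2⟩) _ _ h

lemma mem_reachSet : a ∈ reachSet w S W ↔ a ∈ W ∧ ∃ s ∈ S, ReachIn w W s a := by
  simp only [reachSet, mem_filter]

lemma reachSet_subset : reachSet w S W ⊆ W :=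
  fun _ ha => (mem_reachSet.1 ha).1

lemma subset_reachSet (hS : S ⊆ W) : S ⊆ reachSet w S W :=
  fun s hs => mem_reachSet.2 ⟨hS hs, s, hs, .refl⟩

lemma mem_reachSet_of_adj (ha : a ∈ reachSet w S W) (hb : b ∈ W) (hab : 0 < w a b) :
    b ∈ reachSet w S W := by
  obtain ⟨haW, s, hs, hsa⟩ := mem_reachSet.1 ha
  exact mem_reachSet.2 ⟨hb, s, hs, hsa.tail ⟨haW, hb, hab⟩⟩

lemma isConnectedFrom_reachSet : IsConnectedFrom w S (reachSet w S W) := by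
  intro x hx
  obtain ⟨-, s, hs, hsx⟩ := mem_reachSet.1 hx
  refine ⟨s, hs, ?_⟩
  induction hsx with
  | refl => exact .refl
  | tail hsb hbc ih =>
    have hb := mem_reachSet.2 ⟨hbc.1, s, hs, hsb⟩
    exact (ih hb).tail ⟨hb, hx, hbc.2.2⟩

lemma reachSet_ssubset (h : ¬ IsConnectedFrom w S W) : reachSet w S W ⊂ W := by
  refine ssubset_iff_of_subset reachSet_subset |>.2 ?_
  simp only [IsConnectedFrom, not_forall, not_exists, not_and] at h
  obtain ⟨x, hx, hnx⟩ := h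
  exact ⟨x, hx, fun hr => (mem_reachSet.1 hr).2.elim fun s hs => hnx s hs.1 hs.2⟩

lemma cutSize_reachSet_le {w : V → V → ℕ} {S W : Finset V} :
    cutSize w (reachSet w S W) ≤ cutSize w W :=
  cutSize_le_of_subset_of_forall_eq_zero reachSet_subset fun _ ha _ hb hbR =>
    Nat.eq_zero_of_not_pos fun hab => hbR (mem_reachSet_of_adj ha hb hab)

lemma IsConnectedFrom.mono_left (hS : S ⊆ S') (h : IsConnectedFrom w S W) :
    IsConnectedFrom w S' W := fun x hx =>
  (h x hx).elim fun s hs => ⟨s, hS hs.1, hs.2⟩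

lemma IsConnectedFrom.mono_weight (hw : ∀ a ∈ W, ∀ b ∈ W, 0 < w a b → 0 < w' a b)
    (h : IsConnectedFrom w S W) : IsConnectedFrom w' S W := fun x hx =>
  (h x hx).elim fun s hs => ⟨s, hs.1, hs.2.mono subset_rfl hw⟩

lemma IsConnectedFrom.union [DecidableEq α] (h : IsConnectedFrom w S W)
    (h' : IsConnectedFrom w S W') :
    IsConnectedFrom w S (W ∪ W') := by
  intro x hx
  rcases mem_union.1 hx with hx | hx
  · obtain ⟨s, hs, hsx⟩ := h x hx
    exact ⟨s, hs, hsx.mono subset_union_left fun _ _ _ _ => id⟩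
  · obtain ⟨s, hs, hsx⟩ := h' x hx
    exact ⟨s, hs, hsx.mono subset_union_right fun _ _ _ _ => id⟩

lemma IsConnectedFrom.of_insert [DecidableEq α] {v : α} (hv : v ∈ W) (hWW' : W ⊆ W')
    (h : IsConnectedFrom w S W) (h' : IsConnectedFrom w (insert v S) W') :
    IsConnectedFrom w S W' := by
  intro x hx
  obtain ⟨s, hs, hsx⟩ := h' x hx
  rcases mem_insert.1 hs with rfl | hs
  · obtain ⟨r, hr, hrs⟩ := h s hv
    exact ⟨r, hr, (hrs.mono hWW' fun _ _ _ _ => id).trans hsx⟩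
  · exact ⟨s, hs, hsx⟩

lemma IsConnectedFrom.subset_of_cutSize_eq_zero {w : V → V → ℕ} {S W P : Finset V}
    (h : IsConnectedFrom w S W) (hS : S ⊆ P) (hP : cutSize w P = 0) : W ⊆ P := by
  intro x hx
  obtain ⟨s, hs, hsx⟩ := h x hx
  induction hsx with
  | refl => exact hS hs
  | tail _ hbc ih => exact mem_of_cutSize_eq_zero hP (ih hbc.1) hbc.2.2

end Reachability

section RemoveArc

variable {α : Type*} [DecidableEq α] (w : α → α → ℕ) (u v : α)

def arc : α → α → ℕ := fun a b => if a = u ∧ b = v then 1 else 0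

def removeArc : α → α → ℕ := fun a b => w a b - arc u v a b

variable {w u v}

lemma removeArc_le (a b : α) : removeArc w u v a b ≤ w a b :=
  Nat.sub_le _ _

lemma removeArc_of_ne {a b : α} (hb : b ≠ v) : removeArc w u v a b = w a b := by
  simp [removeArc, arc, hb]

lemma removeArc_add_arc (h : 0 < w u v) : removeArc w u v + arc u v = w := by
  ext a b
  simp only [Pi.add_apply, removeArc, arc]
  split_ifs with hab
  · obtain ⟨rfl, rfl⟩ := hab
    omega
  · simp

lemma cutSize_arc {u v : V} (U : Finset V) :
    cutSize (arc u v) U = if u ∈ U ∧ v ∉ U then 1 else 0 := by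
  simp only [cutSize, arc, ite_and, sum_ite_irrel, sum_const_zero, sum_ite_eq', mem_compl]

lemma cutSize_eq_cutSize_removeArc_add {w : V → V → ℕ} {u v : V} (h : 0 < w u v)
    (U : Finset V) :
    cutSize w U = cutSize (removeArc w u v) U + if u ∈ U ∧ v ∉ U then 1 else 0 := by
  rw [← cutSize_arc, ← cutSize_add, removeArc_add_arc h]

end RemoveArc

section Cuts

variable {S T U U' : Finset V}

lemma IsCut.union (h : IsCut S T U) (h' : IsCut S T U') : IsCut S T (U ∪ U') :=
  ⟨h.1.trans subset_union_left, compl_union U U' ▸ subset_inter h.2 h'.2⟩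

lemma IsCut.inter (h : IsCut S T U) (h' : IsCut S T U') : IsCut S T (U ∩ U') :=
  ⟨subset_inter h.1 h'.1, h.2.trans (compl_subset_compl.2 inter_subset_left)⟩

lemma IsCut.compl (h : IsCut S T U) : IsCut T S Uᶜ :=
  ⟨h.2, (compl_compl U).symm ▸ h.1⟩

lemma IsCut.of_insert {v : V} (h : IsCut (insert v S) T U) : IsCut S T U :=
  ⟨(subset_insert v S).trans h.1, h.2⟩

lemma IsCut.insert {v : V} (h : IsCut S T U) (hv : v ∈ U) : IsCut (insert v S) T U :=
  ⟨insert_subset hv h.1, h.2⟩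

variable (w : V → V → ℕ)

lemma exists_isMMCut (h : IsCut S T U) : ∃ M, IsMMCut w S T M := by
  classical
  obtain ⟨M₀, hM₀, hmin⟩ :=
    exists_min_image (univ.filter (IsCut S T)) (cutSize w) ⟨U, mem_filter.2 ⟨mem_univ _, h⟩⟩
  have hM₀min : IsMinCut w S T M₀ :=
    ⟨(mem_filter.1 hM₀).2, fun U' hU' => hmin U' (mem_filter.2 ⟨mem_univ _, hU'⟩)⟩
  obtain ⟨M, hM, hmax⟩ :=
    exists_max_image (univ.filter (IsMinCut w S T)) card ⟨M₀, mem_filter.2 ⟨mem_univ _, hM₀min⟩⟩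
  exact ⟨M, (mem_filter.1 hM).2, fun U' hU' => hmax U' (mem_filter.2 ⟨mem_univ _, hU'⟩)⟩

variable {w}

lemma IsMinCut.reachSet {M : Finset V} (hM : IsMinCut w S T M) :
    IsMinCut w S T (reachSet w S M) :=
  ⟨⟨subset_reachSet hM.1.1, hM.1.2.trans (compl_subset_compl.2 reachSet_subset)⟩,
    fun U hU => cutSize_reachSet_le.trans (hM.2 U hU)⟩

lemma IsMMCut.cutSize_lt_of_insert {M : Finset V} {v : V} (hM : IsMMCut w S T M) (hv : v ∉ M)
    (hU : IsCut (insert v S) T U) : cutSize w M < cutSize w U := by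
  by_contra! hle
  have hsub := cutSize_union_add_cutSize_inter_le w U M
  have hinter := hM.1.2 _ (hU.of_insert.inter hM.1.1)
  have hunion : IsMinCut w S T (U ∪ M) :=
    ⟨hU.of_insert.union hM.1.1, fun U' hU' => by have := hM.1.2 U' hU'; omega⟩
  have hUM : M = U ∪ M := eq_of_subset_of_card_le subset_union_right (hM.2 _ hunion)
  exact hv (hUM ▸ mem_union_left M (hU.1 (mem_insert_self v S)))

end Cuts

section ImportantCuts

variable (w : V → V → ℕ) (S T : Finset V)

/-- Importance is measured only among cuts whose vertices are all reachable from `S` inside the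
cut: without this, when the minimum cut size is `0` there may be no arc to branch on. -/
def IsConnectedImportantCut (W : Finset V) : Prop :=
  IsCut S T W ∧ IsConnectedFrom w S W ∧
    ∀ W', IsCut S T W' → W ⊂ W' → IsConnectedFrom w S W' → cutSize w W < cutSize w W'

open scoped Classical in
noncomputable def importantCuts (k : ℕ) : Finset (Finset V) :=
  univ.filter fun W => IsConnectedImportantCut w S T W ∧ cutSize w W ≤ k

variable {w S T} {k : ℕ} {W M : Finset V} {u v : V}

lemma mem_importantCuts :
    W ∈ importantCuts w S T k ↔ IsConnectedImportantCut w S T W ∧ cutSize w W ≤ k := by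
  simp only [importantCuts, mem_filter, mem_univ, true_and]

lemma exists_mem_importantCuts_superset (hcut : IsCut S T W) (hconn : IsConnectedFrom w S W)
    (hk : cutSize w W ≤ k) : ∃ W' ∈ importantCuts w S T k, W ⊆ W' := by
  classical
  obtain ⟨W', hW', hmax⟩ := exists_max_image
    (univ.filter fun X => IsCut S T X ∧ IsConnectedFrom w S X ∧ cutSize w X ≤ k ∧ W ⊆ X) card
    ⟨W, by simp [hcut, hconn, hk]⟩
  simp only [mem_filter, mem_univ, true_and] at hW' hmax
  obtain ⟨hW'cut, hW'conn, hW'k, hWW'⟩ := hW'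
  refine ⟨W', mem_importantCuts.2 ⟨⟨hW'cut, hW'conn, fun X hXcut hW'X hXconn => ?_⟩, hW'k⟩,
    hWW'⟩
  by_contra! hle
  exact (card_lt_card hW'X).not_ge
    (hmax X ⟨hXcut, hXconn, hle.trans hW'k, hWW'.trans hW'X.subset⟩)

lemma IsConnectedImportantCut.subset_of_isMinCut (hW : IsConnectedImportantCut w S T W)
    (hM : IsMinCut w S T M) (hMc : IsConnectedFrom w S M) : M ⊆ W := by
  by_contra hMW
  have hsub := cutSize_union_add_cutSize_inter_le w W M
  have hinter := hM.2 _ (hW.1.inter hM.1)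
  have hlt := hW.2.2 (W ∪ M) (hW.1.union hM.1) (left_lt_sup.2 hMW) (hW.2.1.union hMc)
  omega

lemma IsConnectedImportantCut.insert (hW : IsConnectedImportantCut w S T W) (hv : v ∈ W) :
    IsConnectedImportantCut w (insert v S) T W :=
  ⟨hW.1.insert hv, hW.2.1.mono_left (subset_insert v S), fun W' hW'cut hWW' hW'conn =>
    hW.2.2 W' hW'cut.of_insert hWW' (hW.2.1.of_insert hv hWW'.subset hW'conn)⟩

lemma IsConnectedImportantCut.removeArc (hW : IsConnectedImportantCut w S T W)
    (huv : 0 < w u v) (hu : u ∈ W) (hv : v ∉ W) :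
    IsConnectedImportantCut (removeArc w u v) S T W := by
  refine ⟨hW.1, hW.2.1.mono_weight fun a _ b hb hab => ?_, fun W' hW'cut hWW' hW'conn => ?_⟩
  · rwa [removeArc_of_ne (ne_of_mem_of_not_mem hb hv)]
  · have hlt := hW.2.2 W' hW'cut hWW'
      (hW'conn.mono_weight fun a _ b _ hab => hab.trans_le (removeArc_le a b))
    have hW := cutSize_eq_cutSize_removeArc_add huv W
    have hW' := cutSize_eq_cutSize_removeArc_add huv W'
    rw [if_pos ⟨hu, hv⟩] at hW
    split_ifs at hW' <;> omega

lemma importantCuts_subset_singleton (hM : IsMinCut w S T M) (hMc : IsConnectedFrom w S M)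
    (h0 : cutSize w M = 0) : importantCuts w S T k ⊆ {M} := fun W hW => by
  have hWi := (mem_importantCuts.1 hW).1
  exact mem_singleton.2
    ((hWi.2.1.subset_of_cutSize_eq_zero hM.1.1 h0).antisymm (hWi.subset_of_isMinCut hM hMc))

lemma card_importantCuts_le_add (huv : 0 < w u v) (hu : ∀ W ∈ importantCuts w S T k, u ∈ W) :
    #(importantCuts w S T k) ≤
      #(importantCuts w (insert v S) T k) + #(importantCuts (removeArc w u v) S T (k - 1)) := by
  rw [← card_filter_add_card_filter_not (fun W => v ∈ W)]
  refine add_le_add (card_le_card fun W hW => ?_) (card_le_card fun W hW => ?_)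
  · obtain ⟨hW, hv⟩ := mem_filter.1 hW
    obtain ⟨hWi, hWk⟩ := mem_importantCuts.1 hW
    exact mem_importantCuts.2 ⟨hWi.insert hv, hWk⟩
  · obtain ⟨hW, hv⟩ := mem_filter.1 hW
    obtain ⟨hWi, hWk⟩ := mem_importantCuts.1 hW
    have hcut := cutSize_eq_cutSize_removeArc_add huv W
    rw [if_pos ⟨hu W hW, hv⟩] at hcut
    exact mem_importantCuts.2 ⟨hWi.removeArc huv (hu W hW) hv, by omega⟩

end ImportantCuts

/-- `hμ` says `2k - λ ≤ μ` for the minimum cut size `λ`, without having to name `λ`. -/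
theorem card_importantCuts_le (μ : ℕ) (w : V → V → ℕ) (S T : Finset V) (k : ℕ)
    (hμ : ∀ U, IsCut S T U → 2 * k ≤ μ + cutSize w U) : #(importantCuts w S T k) ≤ 2 ^ μ := by
  induction μ using Nat.strong_induction_on generalizing w S T k with
  | _ μ ih =>
  rcases (importantCuts w S T k).eq_empty_or_nonempty with h | ⟨W₀, hW₀⟩
  · simp [h]
  obtain ⟨hW₀i, hW₀k⟩ := mem_importantCuts.1 hW₀
  obtain ⟨M₀, hM₀⟩ := exists_isMMCut w hW₀i.1
  set M := reachSet w S M₀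
  have hM : IsMinCut w S T M := hM₀.1.reachSet
  have hMc : IsConnectedFrom w S M := isConnectedFrom_reachSet
  by_cases h0 : cutSize w M = 0
  · exact (card_le_card (importantCuts_subset_singleton hM hMc h0)).trans
      (by simp [Nat.one_le_two_pow])
  obtain ⟨u, hu, v, hv, huv⟩ := exists_adj_of_cutSize_ne_zero h0
  have hvM₀ : v ∉ M₀ := fun h => hv (mem_reachSet_of_adj hu h huv)
  have hMM₀ := hM.2 M₀ hM₀.1.1
  have hM₀W₀ := hM₀.1.2 W₀ hW₀i.1
  have hμM₀ := hμ M₀ hM₀.1.1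
  calc #(importantCuts w S T k)
      ≤ #(importantCuts w (insert v S) T k) + #(importantCuts (removeArc w u v) S T (k - 1)) :=
        card_importantCuts_le_add huv fun W hW =>
          (mem_importantCuts.1 hW).1.subset_of_isMinCut hM hMc hu
    _ ≤ 2 ^ (μ - 1) + 2 ^ (μ - 1) := by
        gcongr
        · exact ih (μ - 1) (by omega) w (insert v S) T k fun U hU => by
            have := hM₀.cutSize_lt_of_insert hvM₀ hU
            omega
        · exact ih (μ - 1) (by omega) _ S T (k - 1) fun U hU => by
            have := hμ U hU
            have := cutSize_eq_cutSize_removeArc_add huv U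
            split_ifs at this <;> omega
    _ = 2 ^ μ := by rw [← two_mul, ← pow_succ']; congr 1; omega

section MinimalCut

variable {w : V → V → ℕ} {A B V1 : Finset V}

lemma IsMinimalCut.isConnectedFrom (h : IsMinimalCut w A B V1) : IsConnectedFrom w A V1 := by
  by_contra hc
  refine h.2.1 ⟨reachSet w A V1, subset_reachSet h.1.1, reachSet_ssubset hc, ?_⟩
  rintro _ ⟨a, b, rfl, ha, hb, hab⟩
  exact ⟨a, b, rfl, reachSet_subset ha, fun hb' => hb (mem_reachSet_of_adj ha hb' hab), hab⟩

lemma IsMinimalCut.isConnectedFrom_compl (hsymm : ∀ a b, w a b = w b a)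
    (h : IsMinimalCut w A B V1) : IsConnectedFrom w B V1ᶜ := by
  by_contra hc
  refine h.2.2 ⟨reachSet w B V1ᶜ, subset_reachSet h.1.2, reachSet_ssubset hc, ?_⟩
  rintro _ ⟨a, b, rfl, ha, hb, hab⟩
  have hbV1 : b ∈ V1 := by
    by_contra hb'
    exact hb (mem_reachSet_of_adj ha (mem_compl.2 hb') hab)
  exact ⟨b, a, Sym2.eq_swap, hbV1, mem_compl.1 (reachSet_subset ha), hsymm a b ▸ hab⟩

end MinimalCut

section NbhdTraces

variable (w : V → V → ℕ) (S T X : Finset V) (k : ℕ)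

noncomputable def nbhdTraces : Finset (Finset V) :=
  (importantCuts w S T k).biUnion fun W => (nbhd w X ∩ W).powerset

variable {w S T X k}

lemma card_nbhdTraces_le (hX : X ⊆ T) : #(nbhdTraces w S T X k) ≤ 2 ^ (3 * k) :=
  calc #(nbhdTraces w S T X k) ≤ ∑ W ∈ importantCuts w S T k, #(nbhd w X ∩ W).powerset :=
        card_biUnion_le
    _ ≤ ∑ _ ∈ importantCuts w S T k, 2 ^ k := by
        gcongr with W hW
        obtain ⟨hWi, hWk⟩ := mem_importantCuts.1 hW
        rw [card_powerset]
        exact Nat.pow_le_pow_right two_pos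
          ((card_nbhd_inter_le_cutSize (hX.trans hWi.1.2)).trans hWk)
    _ ≤ 2 ^ (2 * k) * 2 ^ k := by
        rw [sum_const, smul_eq_mul]
        gcongr
        exact card_importantCuts_le (2 * k) w S T k fun _ _ => Nat.le_add_right _ _
    _ = 2 ^ (3 * k) := by rw [← pow_add]; ring_nf

lemma subset_nbhd_of_mem_nbhdTraces {Y : Finset V} (hY : Y ∈ nbhdTraces w S T X k) :
    Y ⊆ nbhd w X := by
  obtain ⟨W, -, hYW⟩ := mem_biUnion.1 hY
  exact (mem_powerset.1 hYW).trans inter_subset_left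

lemma nbhd_inter_mem_nbhdTraces {W : Finset V} (hcut : IsCut S T W)
    (hconn : IsConnectedFrom w S W) (hk : cutSize w W ≤ k) :
    nbhd w X ∩ W ∈ nbhdTraces w S T X k := by
  obtain ⟨W', hW', hWW'⟩ := exists_mem_importantCuts_superset hcut hconn hk
  exact mem_biUnion.2 ⟨W', hW', mem_powerset.2 (inter_subset_inter_left hWW')⟩

end NbhdTraces

theorem candidate_pairs_nbhd_general (w : V → V → ℕ)
    (hsymm : ∀ u v, w u v = w v u)
    (A B : Finset V) (uA uB : V → ℕ) (k : ℕ)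
    (X1 X2 : Finset V) :
    ∃ 𝒬 : Finset (Finset V × Finset V), 𝒬.card ≤ 2 ^ (6 * k) ∧
      (∀ p ∈ 𝒬, p.1 ⊆ nbhd w X2 ∧ p.2 ⊆ nbhd w X1) ∧
      ∀ V1 : Finset V, FeasibleCut w uA uB k A B V1 →
        unsat w uA ∩ V1 = X1 → unsat w uB ∩ V1ᶜ = X2 →
        (nbhd w X2 ∩ V1, nbhd w X1 ∩ V1ᶜ) ∈ 𝒬 := by
  refine ⟨nbhdTraces w (A ∪ X1) (B ∪ X2) X2 k ×ˢ nbhdTraces w (B ∪ X2) (A ∪ X1) X1 k,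
    ?_, fun p hp => ?_, ?_⟩
  · rw [card_product, show 6 * k = 3 * k + 3 * k by ring, pow_add]
    exact Nat.mul_le_mul (card_nbhdTraces_le subset_union_right)
      (card_nbhdTraces_le subset_union_right)
  · obtain ⟨hp₁, hp₂⟩ := mem_product.1 hp
    exact ⟨subset_nbhd_of_mem_nbhdTraces hp₁, subset_nbhd_of_mem_nbhdTraces hp₂⟩
  · rintro V1 ⟨hmin, hk, -, -⟩ rfl rfl
    have hcut : IsCut (A ∪ unsat w uA ∩ V1) (B ∪ unsat w uB ∩ V1ᶜ) V1 :=
      ⟨union_subset hmin.1.1 inter_subset_right, union_subset hmin.1.2 inter_subset_right⟩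
    refine mem_product.2 ⟨nbhd_inter_mem_nbhdTraces hcut
      (hmin.isConnectedFrom.mono_left subset_union_left) hk, nbhd_inter_mem_nbhdTraces hcut.compl
      ((hmin.isConnectedFrom_compl hsymm).mono_left subset_union_left) ?_⟩
    rwa [cutSize_compl w hsymm]

/-- a family of at most `2^{6k}` candidate pairs for
`(N(X2) ∩ V1, N(X1) ∩ V2)` over feasible `(A,B)`-cuts with `Z_A ∩ V1 = X1`,
`Z_B ∩ V2 = X2`. -/
theorem candidate_pairs_nbhd (w : V → V → ℕ)
    (hsymm : ∀ u v, w u v = w v u) (hloop : ∀ v, w v v = 0)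
    (A B : Finset V) (uA uB : V → ℕ) (k : ℕ)
    (hA : A.Nonempty) (hB : B.Nonempty) (hAB : Disjoint A B)
    (X1 X2 : Finset V) :
    ∃ 𝒬 : Finset (Finset V × Finset V), 𝒬.card ≤ 2 ^ (6 * k) ∧
      (∀ p ∈ 𝒬, p.1 ⊆ nbhd w X2 ∧ p.2 ⊆ nbhd w X1) ∧
      ∀ V1 : Finset V, FeasibleCut w uA uB k A B V1 →
        unsat w uA ∩ V1 = X1 → unsat w uB ∩ V1ᶜ = X2 →
        (nbhd w X2 ∩ V1, nbhd w X1 ∩ V1ᶜ) ∈ 𝒬 :=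
  candidate_pairs_nbhd_general w hsymm A B uA uB k X1 X2
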